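/- arXiv:2412.10695 — 7 statements merged into one kernel-verified Lean document; each statement's English description precedes it below -/
import Mathlib

section
/- Let m be a 𝒢-measurable real random variable satisfying P(X ≤ m | 𝒢) ≥ 1/2 and P(X ≥ m | 𝒢) ≥ 1/2 almost surely (a conditional median of X given 𝒢). Then for every 𝒢-measurable integrable real random variable ρ, one has E[|X − m|] ≤ E[|X − ρ|]; i.e., the conditional median minimizes the expected absolute deviation among 𝒢-measurable random variables. -/
open MeasureTheory

private lemma median_pointwise (x a b : ℝ) :
    max (b - a) 0 * (2 * (if x ≤ a then (1:ℝ) else 0) - 1)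
      + max (a - b) 0 * (2 * (if a ≤ x then (1:ℝ) else 0) - 1)
      ≤ |x - b| - |x - a| := by
  have h1 := le_abs_self (x - b)
  have h2 := neg_abs_le (x - b)
  rcases le_total a b with hab | hab
  · rw [max_eq_left (sub_nonneg.2 hab), max_eq_right (sub_nonpos.2 hab)]
    rcases le_or_gt x a with hxa | hxa
    · rw [if_pos hxa]
      have h3 := abs_of_nonpos (sub_nonpos.2 hxa)
      nlinarith
    · rw [if_neg (not_le.2 hxa)]
      have h3 := abs_of_nonneg (sub_nonneg.2 hxa.le)
      nlinarith
  · rw [max_eq_right (sub_nonpos.2 hab), max_eq_left (sub_nonneg.2 hab)]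
    rcases le_or_gt a x with hax | hax
    · rw [if_pos hax]
      have h3 := abs_of_nonneg (sub_nonneg.2 hax)
      nlinarith
    · rw [if_neg (not_le.2 hax)]
      have h3 := abs_of_nonpos (sub_nonpos.2 hax.le)
      nlinarith

private lemma indicator_integrable
    {Ω : Type*} {mΩ : MeasurableSpace Ω} {μ : Measure Ω} [IsFiniteMeasure μ]
    {A : Set Ω} (hA : MeasurableSet A) :
    Integrable (A.indicator (fun _ => (1:ℝ))) μ :=
  (integrable_const 1).indicator hA

private lemma integral_mul_nonneg
    {Ω : Type*} {mΩ : MeasurableSpace Ω} {μ : Measure Ω} [IsProbabilityMeasure μ]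
    {G : MeasurableSpace Ω} (hG : G ≤ mΩ)
    {c Y : Ω → ℝ} (hc : StronglyMeasurable[G] c) (hcnn : 0 ≤ᵐ[μ] c)
    (hint : Integrable (c * Y) μ) (hYint : Integrable Y μ)
    (hcond : 0 ≤ᵐ[μ] μ[Y|G]) :
    0 ≤ ∫ ω, c ω * Y ω ∂μ := by
  have h1 : ∫ ω, (c * Y) ω ∂μ = ∫ ω, (μ[c * Y|G]) ω ∂μ :=
    (integral_condExp hG).symm
  have h2 : μ[c * Y|G] =ᵐ[μ] c * μ[Y|G] :=
    condExp_mul_of_stronglyMeasurable_left hc hint hYint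
  have h3 : ∫ ω, c ω * Y ω ∂μ = ∫ ω, (c * Y) ω ∂μ := rfl
  rw [h3, h1, integral_congr_ae h2]
  refine integral_nonneg_of_ae ?_
  filter_upwards [hcnn, hcond] with ω hω1 hω2
  have hω1' : (0:ℝ) ≤ c ω := hω1
  have hω2' : (0:ℝ) ≤ (μ[Y|G]) ω := hω2
  exact mul_nonneg hω1' hω2'

/-- The conditional median minimizes the expected absolute deviation among
`𝒢`-measurable integrable random variables. -/
theorem stmt_0
    {Ω : Type*} {mΩ : MeasurableSpace Ω} {μ : Measure Ω} [IsProbabilityMeasure μ]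
    {G : MeasurableSpace Ω} (hG : G ≤ mΩ)
    {X m : Ω → ℝ} (hX : Integrable X μ) (hmInt : Integrable m μ)
    (hmG : StronglyMeasurable[G] m)
    (hle : ∀ᵐ ω ∂μ, (1:ℝ)/2 ≤ (μ[Set.indicator {ω' | X ω' ≤ m ω'} (fun _ => (1:ℝ)) | G]) ω)
    (hge : ∀ᵐ ω ∂μ, (1:ℝ)/2 ≤ (μ[Set.indicator {ω' | m ω' ≤ X ω'} (fun _ => (1:ℝ)) | G]) ω)
    {ρ : Ω → ℝ} (hρ : Integrable ρ μ) (hρG : StronglyMeasurable[G] ρ) :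
    ∫ ω, |X ω - m ω| ∂μ ≤ ∫ ω, |X ω - ρ ω| ∂μ := by
  -- replace X by a strongly measurable representative X'
  obtain ⟨X', hX'sm, hXX'⟩ := hX.1
  have hX'int : Integrable X' μ := hX.congr hXX'
  have hmmeas : Measurable[mΩ] m := (hmG.mono hG).measurable
  have hX'meas : Measurable[mΩ] X' := hX'sm.measurable
  set A : Set Ω := {ω | X' ω ≤ m ω} with hA
  set B : Set Ω := {ω | m ω ≤ X' ω} with hB
  have hAmeas : MeasurableSet[mΩ] A := measurableSet_le hX'meas hmmeas
  have hBmeas : MeasurableSet[mΩ] B := measurableSet_le hmmeas hX'meas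
  set I₁ : Ω → ℝ := A.indicator (fun _ => 1) with hI₁
  set I₂ : Ω → ℝ := B.indicator (fun _ => 1) with hI₂
  have hI₁int : Integrable I₁ μ := indicator_integrable hAmeas
  have hI₂int : Integrable I₂ μ := indicator_integrable hBmeas
  -- the indicators agree a.e. with those in the hypotheses
  have hI₁ae : Set.indicator {ω' | X ω' ≤ m ω'} (fun _ => (1:ℝ)) =ᵐ[μ] I₁ := by
    filter_upwards [hXX'] with ω hω
    simp only [hI₁, Set.indicator, Set.mem_setOf_eq, hω, hA]
  have hI₂ae : Set.indicator {ω' | m ω' ≤ X ω'} (fun _ => (1:ℝ)) =ᵐ[μ] I₂ := by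
    filter_upwards [hXX'] with ω hω
    simp only [hI₂, Set.indicator, Set.mem_setOf_eq, hω, hB]
  have hle' : ∀ᵐ ω ∂μ, (1:ℝ)/2 ≤ (μ[I₁|G]) ω := by
    filter_upwards [hle, condExp_congr_ae (m := G) hI₁ae] with ω h1 h2
    rw [← h2]; exact h1
  have hge' : ∀ᵐ ω ∂μ, (1:ℝ)/2 ≤ (μ[I₂|G]) ω := by
    filter_upwards [hge, condExp_congr_ae (m := G) hI₂ae] with ω h1 h2
    rw [← h2]; exact h1
  -- Y i = 2 * I i − 1
  set Y₁ : Ω → ℝ := fun ω => 2 * I₁ ω - 1 with hY₁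
  set Y₂ : Ω → ℝ := fun ω => 2 * I₂ ω - 1 with hY₂
  have hY₁int : Integrable Y₁ μ := (hI₁int.const_mul 2).sub (integrable_const 1)
  have hY₂int : Integrable Y₂ μ := (hI₂int.const_mul 2).sub (integrable_const 1)
  have hcondY : ∀ (I : Ω → ℝ), Integrable I μ →
      (∀ᵐ ω ∂μ, (1:ℝ)/2 ≤ (μ[I|G]) ω) →
      0 ≤ᵐ[μ] μ[fun ω => 2 * I ω - 1|G] := by
    intro I hIint hIcond
    have h1 : μ[fun ω => 2 * I ω - 1|G] =ᵐ[μ]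
        μ[fun ω => 2 * I ω|G] - μ[fun _ => (1:ℝ)|G] :=
      condExp_sub (hIint.const_mul 2) (integrable_const 1) G
    have h2 : μ[fun ω => 2 * I ω|G] =ᵐ[μ] fun ω => 2 * (μ[I|G]) ω := by
      have := condExp_smul (μ := μ) (m := G) (2:ℝ) I
      filter_upwards [this] with ω hω
      exact hω
    have h3 : μ[fun _ => (1:ℝ)|G] = fun _ => (1:ℝ) := condExp_const hG 1
    filter_upwards [h1, h2, hIcond] with ω hω1 hω2 hω3
    have heq : (μ[fun ω => 2 * I ω - 1|G]) ω = 2 * (μ[I|G]) ω - 1 := by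
      rw [hω1]; simp [h3, hω2]
    show (0:ℝ) ≤ (μ[fun ω => 2 * I ω - 1|G]) ω
    rw [heq]; linarith
  have hcond₁ := hcondY I₁ hI₁int hle'
  have hcond₂ := hcondY I₂ hI₂int hge'
  -- the coefficients
  set c₁ : Ω → ℝ := fun ω => max (ρ ω - m ω) 0 with hc₁
  set c₂ : Ω → ℝ := fun ω => max (m ω - ρ ω) 0 with hc₂
  have hc₁G : StronglyMeasurable[G] c₁ := (hρG.sub hmG).sup stronglyMeasurable_const
  have hc₂G : StronglyMeasurable[G] c₂ := (hmG.sub hρG).sup stronglyMeasurable_const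
  have hc₁int : Integrable c₁ μ := (hρ.sub hmInt).pos_part
  have hc₂int : Integrable c₂ μ := (hmInt.sub hρ).pos_part
  have hc₁nn : 0 ≤ᵐ[μ] c₁ := Filter.Eventually.of_forall fun ω => le_max_right _ _
  have hc₂nn : 0 ≤ᵐ[μ] c₂ := Filter.Eventually.of_forall fun ω => le_max_right _ _
  -- boundedness of Y i
  have hYbd : ∀ (s : Set Ω), ∀ x : Ω, ‖2 * s.indicator (fun _ => (1:ℝ)) x - 1‖ ≤ 1 := by
    intro s x
    by_cases h : x ∈ s <;> simp [Set.indicator, h] <;> norm_num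
  have hmul₁ : Integrable (c₁ * Y₁) μ := by
    have := hc₁int.bdd_mul hY₁int.1 (c := 1) (Filter.Eventually.of_forall (hYbd A))
    exact (this.congr (Filter.Eventually.of_forall fun ω => mul_comm _ _))
  have hmul₂ : Integrable (c₂ * Y₂) μ := by
    have := hc₂int.bdd_mul hY₂int.1 (c := 1) (Filter.Eventually.of_forall (hYbd B))
    exact (this.congr (Filter.Eventually.of_forall fun ω => mul_comm _ _))
  have hmul₁' : Integrable (fun ω => c₁ ω * Y₁ ω) μ := hmul₁
  have hmul₂' : Integrable (fun ω => c₂ ω * Y₂ ω) μ := hmul₂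
  have hmulsum : Integrable (fun ω => c₁ ω * Y₁ ω + c₂ ω * Y₂ ω) μ := hmul₁'.add hmul₂'
  -- pointwise inequality with X'
  have hpt : ∀ ω, c₁ ω * Y₁ ω + c₂ ω * Y₂ ω ≤ |X' ω - ρ ω| - |X' ω - m ω| := by
    intro ω
    have := median_pointwise (X' ω) (m ω) (ρ ω)
    simpa [hc₁, hc₂, hY₁, hY₂, hI₁, hI₂, Set.indicator, hA, hB, Set.mem_setOf_eq] using this
  -- integrate
  have hi1 : Integrable (fun ω => |X' ω - ρ ω|) μ := (hX'int.sub hρ).abs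
  have hi2 : Integrable (fun ω => |X' ω - m ω|) μ := (hX'int.sub hmInt).abs
  have hdiffint : Integrable (fun ω => |X' ω - ρ ω| - |X' ω - m ω|) μ := hi1.sub hi2
  have h0 : 0 ≤ ∫ ω, (|X' ω - ρ ω| - |X' ω - m ω|) ∂μ := by
    calc 0 ≤ ∫ ω, (c₁ ω * Y₁ ω + c₂ ω * Y₂ ω) ∂μ := by
              rw [integral_add hmul₁' hmul₂']
              have h1 := integral_mul_nonneg hG hc₁G hc₁nn hmul₁ hY₁int hcond₁
              have h2 := integral_mul_nonneg hG hc₂G hc₂nn hmul₂ hY₂int hcond₂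
              linarith
      _ ≤ ∫ ω, (|X' ω - ρ ω| - |X' ω - m ω|) ∂μ :=
          integral_mono hmulsum hdiffint hpt
  have hsub : ∫ ω, |X' ω - m ω| ∂μ ≤ ∫ ω, |X' ω - ρ ω| ∂μ := by
    rw [integral_sub hi1 hi2] at h0
    linarith
  have he1 : ∫ ω, |X ω - m ω| ∂μ = ∫ ω, |X' ω - m ω| ∂μ := by
    refine integral_congr_ae ?_
    filter_upwards [hXX'] with ω hω; rw [hω]
  have he2 : ∫ ω, |X ω - ρ ω| ∂μ = ∫ ω, |X' ω - ρ ω| ∂μ := by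
    refine integral_congr_ae ?_
    filter_upwards [hXX'] with ω hω; rw [hω]
  rw [he1, he2]; exact hsub
end

section
/- For every n ≥ 1, Σ_{k=1}^n (X_kᵀ A_{k-1}^{-1} X_k) / (1 + X_kᵀ A_{k-1}^{-1} X_k) ≤ log det(A_n) − log det(A_0). -/
open Matrix Finset

lemma vecMulVec_posSemidef {m : Type*} [Fintype m] (x : m → ℝ) :
    (vecMulVec x x).PosSemidef := by
  refine Matrix.PosSemidef.of_dotProduct_mulVec_nonneg ?_ ?_
  · ext i j
    simp [Matrix.conjTranspose, vecMulVec_apply, mul_comm]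
  · intro y
    have : y ⬝ᵥ (vecMulVec x x) *ᵥ y = (x ⬝ᵥ y) * (x ⬝ᵥ y) := by
      simp only [dotProduct, mulVec, vecMulVec_apply]
      simp [Finset.mul_sum, Finset.sum_mul, mul_assoc, mul_comm, mul_left_comm]
    simp only [RCLike.star_def, starRingEnd_apply, star_trivial]
    rw [this]
    exact mul_self_nonneg _

lemma div_add_self_le_log {s : ℝ} (hs : 0 ≤ s) :
    s / (1 + s) ≤ Real.log (1 + s) := by
  have h1 : (0:ℝ) < 1 + s := by linarith
  have := Real.one_sub_inv_le_log_of_pos h1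
  have h2 : s / (1 + s) = 1 - (1 + s)⁻¹ := by
    field_simp
    ring
  linarith [h2 ▸ this]

/-- Lemma 3 (Lai–Wei): for `A_n = A_0 + Σ_{i=1}^n X_i X_iᵀ` with `A_0` symmetric
positive definite, `Σ_{k=1}^n (X_kᵀ A_{k-1}^{-1} X_k)/(1 + X_kᵀ A_{k-1}^{-1} X_k)
≤ log det A_n − log det A_0`. -/
theorem stmt_3 {d : ℕ} (hd : 0 < d) (X : ℕ → (Fin d → ℝ))
    (A : ℕ → Matrix (Fin d) (Fin d) ℝ)
    (hA0symm : (A 0).IsSymm) (hA0pd : (A 0).PosDef)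
    (hA : ∀ n, A n = A 0 + ∑ i ∈ range n, vecMulVec (X (i+1)) (X (i+1)))
    (n : ℕ) (hn : 1 ≤ n) :
    ∑ k ∈ Icc 1 n, (X k ⬝ᵥ ((A (k-1))⁻¹ *ᵥ X k)) / (1 + X k ⬝ᵥ ((A (k-1))⁻¹ *ᵥ X k))
      ≤ Real.log (A n).det - Real.log (A 0).det := by
  -- every A k is positive definite
  have hpd : ∀ k, (A k).PosDef := by
    intro k
    rw [hA k]
    refine hA0pd.add_posSemidef ?_
    exact Finset.sum_induction _ _ (fun a b ha hb => ha.add hb)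
      (Matrix.PosSemidef.zero) (fun i _ => vecMulVec_posSemidef _)
  -- the quadratic form values are nonneg
  have hs : ∀ k : ℕ, 0 ≤ X k ⬝ᵥ ((A (k-1))⁻¹ *ᵥ X k) := by
    intro k
    have := ((hpd (k-1)).inv).posSemidef.dotProduct_mulVec_nonneg (X k)
    simpa using this
  -- determinant recursion
  have hdet : ∀ k : ℕ, (A (k+1)).det
      = (A k).det * (1 + X (k+1) ⬝ᵥ ((A k)⁻¹ *ᵥ X (k+1))) := by
    intro k
    have hstep : A (k+1) = A k + replicateCol Unit (X (k+1)) * replicateRow Unit (X (k+1)) := by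
      rw [hA (k+1), hA k, Finset.sum_range_succ, ← vecMulVec_eq, add_assoc]
    have hu : IsUnit (A k).det := (hpd k).det_pos.ne'.isUnit
    rw [hstep, Matrix.det_add_replicateCol_mul_replicateRow hu]
    congr 1
    rw [Matrix.det_unique]
    simp only [Matrix.add_apply, Matrix.one_apply_eq]
    congr 1
    rw [← Matrix.replicateRow_vecMul, Matrix.replicateRow_mul_replicateCol_apply, ← Matrix.dotProduct_mulVec]
  -- each step
  have hstep : ∀ k : ℕ,
      (X (k+1) ⬝ᵥ ((A k)⁻¹ *ᵥ X (k+1))) / (1 + X (k+1) ⬝ᵥ ((A k)⁻¹ *ᵥ X (k+1)))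
        ≤ Real.log (A (k+1)).det - Real.log (A k).det := by
    intro k
    have hsk := hs (k+1)
    simp only [Nat.add_sub_cancel] at hsk
    have h1 : (0:ℝ) < 1 + X (k+1) ⬝ᵥ ((A k)⁻¹ *ᵥ X (k+1)) := by linarith
    rw [hdet k, Real.log_mul (hpd k).det_pos.ne' h1.ne', add_sub_cancel_left]
    exact div_add_self_le_log hsk
  -- induction
  clear hn
  induction n with
  | zero => simp
  | succ m ih =>
    rw [Finset.sum_Icc_succ_top (Nat.one_le_iff_ne_zero.mpr (Nat.succ_ne_zero m))]
    have h := hstep m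
    simp only [Nat.add_sub_cancel]
    linarith
end

section
/- If the sequence of vectors {X_k}_{k≥1} is bounded, then Σ_{k=1}^∞ (X_kᵀ A_{k-1}^{-1} X_k)² < ∞. -/
open Matrix Finset

variable {d : ℕ}

lemma myQuad_vecMulVec (x y : Fin d → ℝ) :
    dotProduct y (vecMulVec x x *ᵥ y) = (x ⬝ᵥ y)^2 := by
  simp only [vecMulVec_apply, mulVec, dotProduct, sq, Finset.mul_sum, Finset.sum_mul]
  exact Finset.sum_congr rfl fun i _ => Finset.sum_congr rfl fun j _ => by ring

lemma myPosSemidef_vecMulVec (x : Fin d → ℝ) : (vecMulVec x x).PosSemidef := by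
  refine Matrix.PosSemidef.of_dotProduct_mulVec_nonneg ?_ ?_
  · ext i j
    simp [vecMulVec_apply, conjTranspose_apply, mul_comm]
  · intro y
    rw [show star y = y from star_trivial y, myQuad_vecMulVec]
    positivity

lemma myMul_vecMulVec_mul (M N : Matrix (Fin d) (Fin d) ℝ) (u v : Fin d → ℝ) :
    M * vecMulVec u v * N = vecMulVec (M *ᵥ u) (v ᵥ* N) := by
  ext i j
  simp only [Matrix.mul_apply, vecMulVec_apply, mulVec, vecMul, dotProduct,
    Finset.sum_mul, Finset.mul_sum]
  exact Finset.sum_congr rfl fun a _ => Finset.sum_congr rfl fun b _ => by ring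

lemma myTrace_vecMulVec (u v : Fin d → ℝ) : (vecMulVec u v).trace = u ⬝ᵥ v := by
  simp [Matrix.trace, vecMulVec_apply, dotProduct, Matrix.diag]

lemma myTrace_nonneg {M : Matrix (Fin d) (Fin d) ℝ} (hM : M.PosSemidef) : 0 ≤ M.trace := by
  have h : ∀ i, 0 ≤ M i i := by
    intro i
    have := hM.dotProduct_mulVec_nonneg (Pi.single i 1)
    simpa [dotProduct, mulVec, Pi.single_apply, Finset.mul_sum, mul_ite, ite_mul] using this
  exact Finset.sum_nonneg fun i _ => h i

lemma myVecMulVec_mul_vecMulVec (M : Matrix (Fin d) (Fin d) ℝ) (x : Fin d → ℝ) :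
    vecMulVec x x * M * vecMulVec x x = (x ⬝ᵥ M *ᵥ x) • vecMulVec x x := by
  ext i j
  simp only [Matrix.mul_apply, vecMulVec_apply, mulVec, dotProduct, Matrix.smul_apply,
    Finset.sum_mul, Finset.mul_sum, smul_eq_mul]
  conv_lhs => rw [Finset.sum_comm]
  exact Finset.sum_congr rfl fun a _ => Finset.sum_congr rfl fun b _ => by ring

lemma mySM {A : Matrix (Fin d) (Fin d) ℝ} (hA : A.PosDef) (x : Fin d → ℝ) :
    (A + vecMulVec x x)⁻¹
      = A⁻¹ - (1 + x ⬝ᵥ A⁻¹ *ᵥ x)⁻¹ • (A⁻¹ * vecMulVec x x * A⁻¹) := by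
  have hs : 0 ≤ x ⬝ᵥ A⁻¹ *ᵥ x := by
    have := hA.inv.posSemidef.dotProduct_mulVec_nonneg x
    rwa [star_trivial] at this
  set s : ℝ := x ⬝ᵥ A⁻¹ *ᵥ x with hsdef
  have h1 : (1 : ℝ) + s ≠ 0 := by positivity
  have hAinv : A * A⁻¹ = 1 := mul_nonsing_inv A ((isUnit_iff_isUnit_det _).1 hA.isUnit)
  apply inv_eq_right_inv
  set V := vecMulVec x x with hV
  have key : V * A⁻¹ * V = s • V := myVecMulVec_mul_vecMulVec A⁻¹ x
  have expand : (A + V) * (A⁻¹ - (1+s)⁻¹ • (A⁻¹ * V * A⁻¹))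
      = A * A⁻¹ - (1+s)⁻¹ • (A * A⁻¹ * V * A⁻¹) + V * A⁻¹
        - (1+s)⁻¹ • (V * A⁻¹ * V * A⁻¹) := by
    simp only [Matrix.mul_sub, Matrix.add_mul, Matrix.mul_smul, Matrix.mul_assoc, smul_add]
    abel
  rw [expand, hAinv, Matrix.one_mul, key, Matrix.smul_mul, smul_smul]
  match_scalars
  · ring
  · field_simp; ring

/-- Lemma 4 (Guo): for a bounded sequence of vectors `X_k` and
`A_n = A_0 + Σ_{i=1}^n X_i X_iᵀ` with `A_0` positive definite,
`Σ_{k=1}^∞ (X_kᵀ A_{k-1}^{-1} X_k)² < ∞`. -/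
theorem stmt_4 {d : ℕ} (hd : 0 < d) (X : ℕ → (Fin d → ℝ))
    (A : ℕ → Matrix (Fin d) (Fin d) ℝ)
    (hA0symm : (A 0).IsSymm) (hA0pd : (A 0).PosDef)
    (hA : ∀ n, A n = A 0 + ∑ i ∈ range n, vecMulVec (X (i+1)) (X (i+1)))
    (hbdd : ∃ B, ∀ k i, |X k i| ≤ B) :
    Summable (fun k : ℕ => (X (k+1) ⬝ᵥ ((A k)⁻¹ *ᵥ X (k+1)))^2) := by
  obtain ⟨B, hB⟩ := hbdd
  have hB0 : 0 ≤ B := le_trans (abs_nonneg _) (hB 0 ⟨0, hd⟩)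
  have hstep : ∀ n, A (n+1) = A n + vecMulVec (X (n+1)) (X (n+1)) := fun n => by
    rw [hA (n+1), hA n, Finset.sum_range_succ, add_assoc]
  have hPD : ∀ n, (A n).PosDef := by
    intro n
    induction n with
    | zero => exact hA0pd
    | succ n ih => rw [hstep n]; exact ih.add_posSemidef (myPosSemidef_vecMulVec _)
  have hsymm : ∀ n, ((A n)⁻¹)ᵀ = (A n)⁻¹ := by
    intro n
    rw [transpose_nonsing_inv]
    congr 1
    have := (hPD n).isHermitian
    rwa [IsHermitian, conjTranspose_eq_transpose_of_trivial] at this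
  set s : ℕ → ℝ := fun k => X (k+1) ⬝ᵥ ((A k)⁻¹ *ᵥ X (k+1)) with hsdef
  set u : ℕ → (Fin d → ℝ) := fun k => (A k)⁻¹ *ᵥ X (k+1) with hudef
  set T : ℕ → ℝ := fun n => ((A n)⁻¹).trace with hTdef
  have hs_nonneg : ∀ k, 0 ≤ s k := by
    intro k
    have := (hPD k).inv.posSemidef.dotProduct_mulVec_nonneg (X (k+1))
    rwa [star_trivial] at this
  have h1s : ∀ k, (0:ℝ) < 1 + s k := fun k => by have := hs_nonneg k; linarith
  have hT : ∀ k, T (k+1) = T k - (1 + s k)⁻¹ * (u k ⬝ᵥ u k) := by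
    intro k
    have h2 : (A (k+1))⁻¹ = (A k)⁻¹
        - (1 + s k)⁻¹ • ((A k)⁻¹ * vecMulVec (X (k+1)) (X (k+1)) * (A k)⁻¹) := by
      rw [hstep k]; exact mySM (hPD k) _
    have hv : X (k+1) ᵥ* (A k)⁻¹ = u k := by
      rw [← hsymm k, vecMul_transpose]
    have h3 : (A k)⁻¹ * vecMulVec (X (k+1)) (X (k+1)) * (A k)⁻¹
        = vecMulVec (u k) (u k) := by
      rw [myMul_vecMulVec_mul, hv]
    rw [hTdef]
    simp only []
    rw [h2, h3, trace_sub, trace_smul, myTrace_vecMulVec, smul_eq_mul]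
  have hTnonneg : ∀ n, 0 ≤ T n := fun n => myTrace_nonneg (hPD n).inv.posSemidef
  have huu_nonneg : ∀ k, 0 ≤ u k ⬝ᵥ u k := by
    intro k
    exact Finset.sum_nonneg fun i _ => mul_self_nonneg _
  have hTmono : ∀ k, T (k+1) ≤ T k := by
    intro k
    rw [hT k]
    have : 0 ≤ (1 + s k)⁻¹ * (u k ⬝ᵥ u k) :=
      mul_nonneg (inv_nonneg.2 (h1s k).le) (huu_nonneg k)
    linarith
  have hTle : ∀ n, T n ≤ T 0 := by
    intro n
    induction n with
    | zero => exact le_refl _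
    | succ n ih => exact le_trans (hTmono n) ih
  have huu : ∀ k, u k ⬝ᵥ u k = (1 + s k) * (T k - T (k+1)) := by
    intro k
    rw [hT k]
    field_simp
    rw [sub_sub_cancel, mul_div_assoc', mul_div_cancel_left₀ _ (h1s k).ne']
  have hxx : ∀ k, X (k+1) ⬝ᵥ X (k+1) ≤ d * B^2 := by
    intro k
    calc X (k+1) ⬝ᵥ X (k+1) = ∑ i, X (k+1) i * X (k+1) i := rfl
    _ ≤ ∑ _i : Fin d, B^2 := by
        refine Finset.sum_le_sum fun i _ => ?_
        have := hB (k+1) i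
        nlinarith [abs_nonneg (X (k+1) i), sq_abs (X (k+1) i)]
    _ = d * B^2 := by simp [mul_comm]
  have hxx_nonneg : ∀ k, 0 ≤ X (k+1) ⬝ᵥ X (k+1) :=
    fun k => Finset.sum_nonneg fun i _ => mul_self_nonneg _
  have hCS : ∀ k, s k ^ 2 ≤ (X (k+1) ⬝ᵥ X (k+1)) * (u k ⬝ᵥ u k) := by
    intro k
    have := Finset.sum_mul_sq_le_sq_mul_sq Finset.univ (X (k+1)) (u k)
    simpa [dotProduct, sq, hsdef, hudef] using this
  set T0 := T 0 with hT0
  set K := (d : ℝ) * B^2 * T0 with hK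
  have hK0 : 0 ≤ K := mul_nonneg (by positivity) (hTnonneg 0)
  have hsK : ∀ k, s k ≤ K + 1 := by
    intro k
    have hdiff : T k - T (k+1) ≤ T0 := by
      have h1 := hTle k; have h2 := hTnonneg (k+1); linarith
    have hdiff0 : 0 ≤ T k - T (k+1) := by linarith [hTmono k]
    have h3 : s k ^2 ≤ K * (1 + s k) := by
      calc s k ^2 ≤ (X (k+1) ⬝ᵥ X (k+1)) * ((1 + s k) * (T k - T (k+1))) := by
            rw [← huu k]; exact hCS k
      _ ≤ (d * B^2) * ((1 + s k) * T0) := by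
          apply mul_le_mul (hxx k) ?_ ?_ (by positivity)
          · exact mul_le_mul_of_nonneg_left hdiff (h1s k).le
          · exact mul_nonneg (h1s k).le hdiff0
      _ = K * (1 + s k) := by ring
    nlinarith [hs_nonneg k, sq_nonneg (s k - K - 1)]
  have hK2 : (0:ℝ) ≤ K + 2 := by linarith
  have hbound : ∀ k, s k ^ 2 ≤ ((d:ℝ) * B^2 * (K + 2)) * (T k - T (k+1)) := by
    intro k
    have hdiff0 : 0 ≤ T k - T (k+1) := by linarith [hTmono k]
    calc s k ^2 ≤ (X (k+1) ⬝ᵥ X (k+1)) * ((1 + s k) * (T k - T (k+1))) := by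
          rw [← huu k]; exact hCS k
    _ ≤ ((d:ℝ)*B^2) * ((K + 2) * (T k - T (k+1))) := by
        apply mul_le_mul (hxx k) ?_ ?_ (by positivity)
        · exact mul_le_mul_of_nonneg_right (by linarith [hsK k]) hdiff0
        · exact mul_nonneg (h1s k).le hdiff0
    _ = ((d:ℝ)*B^2*(K+2)) * (T k - T (k+1)) := by ring
  apply summable_of_sum_range_le (c := (d:ℝ)*B^2*(K+2)*T0) (fun n => sq_nonneg _)
  intro n
  calc ∑ k ∈ range n, s k ^2
      ≤ ∑ k ∈ range n, ((d:ℝ)*B^2*(K+2)) * (T k - T (k+1)) :=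
        Finset.sum_le_sum fun k _ => hbound k
  _ = ((d:ℝ)*B^2*(K+2)) * (T 0 - T n) := by rw [← Finset.mul_sum, Finset.sum_range_sub']
  _ ≤ (d:ℝ)*B^2*(K+2)*T0 := by
      have h5 : T 0 - T n ≤ T0 := by linarith [hTnonneg n]
      have h6 : (0:ℝ) ≤ (d:ℝ)*B^2*(K+2) := by positivity
      calc ((d:ℝ)*B^2*(K+2)) * (T 0 - T n) ≤ ((d:ℝ)*B^2*(K+2)) * T0 :=
            mul_le_mul_of_nonneg_left h5 h6
      _ = (d:ℝ)*B^2*(K+2)*T0 := by ring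
end

section
/- If S(b) = L, then ψ(b) = F(l − b) − F(l − x). -/
open MeasureTheory Filter Topology

lemma atom_null_aux {Ω : Type*} [MeasurableSpace Ω] (μ : Measure Ω) [IsProbabilityMeasure μ]
    (ε : Ω → ℝ) (hε : Measurable ε) (F : ℝ → ℝ)
    (hFcdf : ∀ z, F z = (μ {ω | ε ω ≤ z}).toReal) (hFc : Continuous F) (c : ℝ) :
    μ {ω | ε ω = c} = 0 := by
  have hfin : ∀ s : Set Ω, μ s ≠ ⊤ := fun s => measure_ne_top μ s
  have key : ∀ n : ℕ, (μ {ω | ε ω = c}).toReal ≤ F c - F (c - 1/(n+1)) := by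
    intro n
    have hδ : (0:ℝ) < 1/(n+1) := by positivity
    have hsub : {ω | ε ω = c} ⊆ {ω | ε ω ≤ c} \ {ω | ε ω ≤ c - 1/(n+1)} := by
      intro ω hω
      have hωe : ε ω = c := hω
      constructor
      · simp [Set.mem_setOf_eq, hωe]
      · simp only [Set.mem_setOf_eq, hωe, not_le]
        linarith
    have hmono : {ω | ε ω ≤ c - 1/(n+1)} ⊆ {ω | ε ω ≤ c} := by
      intro ω hω; simp only [Set.mem_setOf_eq] at *; linarith
    have hdiff : μ ({ω | ε ω ≤ c} \ {ω | ε ω ≤ c - 1/(n+1)})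
        = μ {ω | ε ω ≤ c} - μ {ω | ε ω ≤ c - 1/(n+1)} :=
      measure_diff hmono ((hε measurableSet_Iic).nullMeasurableSet) (hfin _)
    calc (μ {ω | ε ω = c}).toReal
        ≤ (μ ({ω | ε ω ≤ c} \ {ω | ε ω ≤ c - 1/(n+1)})).toReal :=
          ENNReal.toReal_mono (hfin _) (measure_mono hsub)
      _ = F c - F (c - 1/(n+1)) := by
          rw [hdiff, ENNReal.toReal_sub_of_le (measure_mono hmono) (hfin _),
            hFcdf, hFcdf]
  have hlim : Tendsto (fun n : ℕ => F c - F (c - 1/(n+1))) atTop (𝓝 0) := by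
    have h1 : Tendsto (fun n : ℕ => c - 1/((n:ℝ)+1)) atTop (𝓝 c) := by
      have : Tendsto (fun n : ℕ => 1 / ((n:ℝ) + 1)) atTop (𝓝 0) := tendsto_one_div_add_atTop_nhds_zero_nat
      have h2 := tendsto_const_nhds (x := c) (f := atTop (α := ℕ)) |>.sub this
      simpa using h2
    have h3 : Tendsto (fun n : ℕ => F (c - 1/(n+1))) atTop (𝓝 (F c)) :=
      (hFc.tendsto c).comp h1
    have h4 := tendsto_const_nhds (x := F c) (f := atTop (α := ℕ)) |>.sub h3
    simpa using h4
  have hle : (μ {ω | ε ω = c}).toReal ≤ 0 := ge_of_tendsto' hlim key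
  have h0 : (μ {ω | ε ω = c}).toReal = 0 :=
    le_antisymm hle ENNReal.toReal_nonneg
  rwa [ENNReal.toReal_eq_zero_iff, or_iff_left (hfin _)] at h0

open MeasureTheory

/-- If `S(b) = L`, then `ψ(b) = F(l − b) − F(l − x)`. -/
theorem stmt_5
    {Ω : Type*} {mΩ : MeasurableSpace Ω} {μ : Measure Ω} [IsProbabilityMeasure μ]
    (ε : Ω → ℝ) (hε : Measurable ε)
    (F f : ℝ → ℝ)
    (hFcdf : ∀ z, F z = (μ {ω | ε ω ≤ z}).toReal)
    (hFderiv : ∀ z, HasDerivAt F (f z) z) (hfcont : Continuous f)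
    (L l u U : ℝ) (hLl : L ≤ l) (hlu : l ≤ u) (huU : u ≤ U) (hLU : L < U)
    (S : ℝ → ℝ) (hS : ∀ z, S z = if z < l then L else if z ≤ u then z else U)
    (ψ : ℝ → ℝ → ℝ)
    (hψ : ∀ x b, ψ x b = (∫ ω, Real.sign (S (x + ε ω) - S b) ∂μ)
        + F (u - b) * (if S b = U then 1 else 0)
        - (1 - F (l - b)) * (if S b = L then 1 else 0))
    (x b : ℝ) (hb : S b = L) :
    ψ x b = F (l - b) - F (l - x) := by
  have hFc : Continuous F := continuous_iff_continuousAt.2 fun z => (hFderiv z).continuousAt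
  set c := l - x with hc
  have hnull : μ {ω | ε ω = c} = 0 := atom_null_aux μ ε hε F hFcdf hFc c
  set A : Set Ω := {ω | ε ω ≤ c}ᶜ with hA
  have hAm : MeasurableSet A := (hε measurableSet_Iic).compl
  have hae : ∀ᵐ ω ∂μ, Real.sign (S (x + ε ω) - S b) = A.indicator (fun _ => (1:ℝ)) ω := by
    filter_upwards [measure_eq_zero_iff_ae_notMem.mp hnull] with ω hω
    rw [hb]
    rcases lt_trichotomy (ε ω) c with h | h | h
    · have hlt : x + ε ω < l := by simp only [hc] at h; linarith
      rw [hS, if_pos hlt, sub_self, Real.sign_zero]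
      have : ω ∉ A := by simp only [hA, Set.mem_compl_iff, Set.mem_setOf_eq, not_le, not_lt]; linarith
      exact (Set.indicator_of_notMem this _).symm
    · exact absurd h hω
    · have hge : ¬ (x + ε ω < l) := by simp only [hc] at h; push_neg; linarith
      have hωA : ω ∈ A := by simp only [hA, Set.mem_compl_iff, Set.mem_setOf_eq, not_le]; linarith
      rw [hS, if_neg hge]
      have hpos : ∀ v, L < v → Real.sign (v - L) = 1 := fun v hv =>
        Real.sign_of_pos (by linarith)
      by_cases hu : x + ε ω ≤ u
      · rw [if_pos hu, hpos _ (by push_neg at hge; nlinarith [hc] ; ), Set.indicator_of_mem hωA]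
      · rw [if_neg hu, hpos _ hLU, Set.indicator_of_mem hωA]
  have hint : (∫ ω, Real.sign (S (x + ε ω) - S b) ∂μ) = (μ A).toReal := by
    rw [integral_congr_ae hae, integral_indicator_const (1:ℝ) hAm]
    simp
    rfl
  have hμA : (μ A).toReal = 1 - F c := by
    rw [hA, measure_compl (show MeasurableSet {ω | ε ω ≤ c} from hε measurableSet_Iic) (measure_ne_top μ _), measure_univ,
      ENNReal.toReal_sub_of_le prob_le_one (by simp), hFcdf]
    simp
  rw [hψ, hint, hμA, hb, if_pos rfl, if_neg (fun h => absurd h hLU.ne)]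
  ring
end

section
/- If L < S(b) < U (equivalently l ≤ b ≤ u with L < b < U, so that S(b) = b), then ψ(b) = 1 − 2F(b − x). -/
open MeasureTheory

/-- If `L < S(b) < U`, then `ψ(b) = 1 − 2F(b − x)`. -/
theorem stmt_6
    {Ω : Type*} {mΩ : MeasurableSpace Ω} {μ : Measure Ω} [IsProbabilityMeasure μ]
    (ε : Ω → ℝ) (hε : Measurable ε)
    (F f : ℝ → ℝ)
    (hFcdf : ∀ z, F z = (μ {ω | ε ω ≤ z}).toReal)
    (hFderiv : ∀ z, HasDerivAt F (f z) z) (hfcont : Continuous f)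
    (L l u U : ℝ) (hLl : L ≤ l) (hlu : l ≤ u) (huU : u ≤ U) (hLU : L < U)
    (S : ℝ → ℝ) (hS : ∀ z, S z = if z < l then L else if z ≤ u then z else U)
    (ψ : ℝ → ℝ → ℝ)
    (hψ : ∀ x b, ψ x b = (∫ ω, Real.sign (S (x + ε ω) - S b) ∂μ)
        + F (u - b) * (if S b = U then 1 else 0)
        - (1 - F (l - b)) * (if S b = L then 1 else 0))
    (x b : ℝ) (hb1 : L < S b) (hb2 : S b < U) :
    ψ x b = 1 - 2 * F (b - x) := by
  -- From L < S b < U we get l ≤ b ≤ u and S b = b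
  have hbl : ¬ b < l := by
    intro h
    rw [hS b, if_pos h] at hb1
    exact lt_irrefl _ hb1
  have hbu : b ≤ u := by
    by_contra h
    rw [hS b, if_neg hbl, if_neg h] at hb2
    exact lt_irrefl _ hb2
  have hSb : S b = b := by rw [hS b, if_neg hbl, if_pos hbu]
  have hlb : l ≤ b := not_lt.mp hbl
  have hLb : L < b := hSb ▸ hb1
  have hbU : b < U := hSb ▸ hb2
  -- pointwise: sign (S z - b) = sign (z - b)
  have hsign : ∀ z : ℝ, Real.sign (S z - b) = Real.sign (z - b) := by
    intro z
    rw [hS z]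
    by_cases h1 : z < l
    · rw [if_pos h1, Real.sign_of_neg (by linarith), Real.sign_of_neg (by linarith)]
    · rw [if_neg h1]
      by_cases h2 : z ≤ u
      · rw [if_pos h2]
      · rw [if_neg h2, Real.sign_of_pos (by linarith), Real.sign_of_pos (by linarith)]
  set c : ℝ := b - x with hc
  set A : Set Ω := {ω | ε ω < c} with hA
  set B : Set Ω := {ω | c < ε ω} with hB
  have hAm : MeasurableSet A := hε measurableSet_Iio
  have hBm : MeasurableSet B := hε measurableSet_Ioi
  -- compute the integral
  have hptw : ∀ ω, Real.sign (S (x + ε ω) - S b)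
      = B.indicator (fun _ => (1:ℝ)) ω - A.indicator (fun _ => (1:ℝ)) ω := by
    intro ω
    rw [hSb, hsign]
    rcases lt_trichotomy (ε ω) c with h | h | h
    · have h1 : ω ∈ A := h
      have h2 : ω ∉ B := by simp [hB, not_lt, le_of_lt h]
      rw [Real.sign_of_neg (by simp [hc] at h ⊢; linarith),
        Set.indicator_of_mem h1, Set.indicator_of_notMem h2]
      norm_num
    · have h1 : ω ∉ A := by simp [hA, h]
      have h2 : ω ∉ B := by simp [hB, h]
      have : x + ε ω - b = 0 := by simp [hc] at h; linarith
      rw [this, Real.sign_zero, Set.indicator_of_notMem h1, Set.indicator_of_notMem h2]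
      norm_num
    · have h1 : ω ∉ A := by simp [hA, not_lt, le_of_lt h]
      have h2 : ω ∈ B := h
      rw [Real.sign_of_pos (by simp [hc] at h ⊢; linarith),
        Set.indicator_of_notMem h1, Set.indicator_of_mem h2]
      norm_num
  have hint : (∫ ω, Real.sign (S (x + ε ω) - S b) ∂μ)
      = (μ B).toReal - (μ A).toReal := by
    rw [integral_congr_ae (Filter.Eventually.of_forall hptw),
      integral_sub ((integrable_const (1:ℝ)).indicator hBm)
        ((integrable_const (1:ℝ)).indicator hAm),
      integral_indicator_const _ hBm, integral_indicator_const _ hAm]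
    simp
    rfl
  -- μ B = 1 - F c
  have hBval : (μ B).toReal = 1 - F c := by
    have hcompl : B = {ω | ε ω ≤ c}ᶜ := by
      ext ω; simp [hB, not_le]
    rw [hcompl, prob_compl_eq_one_sub (measurableSet_le hε measurable_const),
      ENNReal.toReal_sub_of_le prob_le_one ENNReal.one_ne_top, ENNReal.toReal_one, hFcdf]
  -- μ A = F c  (continuity of F)
  have hAval : (μ A).toReal = F c := by
    have hFc : Continuous F := continuous_iff_continuousAt.mpr fun z => (hFderiv z).continuousAt
    have hmono : Monotone (fun n : ℕ => {ω | ε ω ≤ c - 1/(n+1)}) := by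
      intro m n hmn ω hω
      simp only [Set.mem_setOf_eq] at *
      have h1 : (1:ℝ)/(n+1) ≤ 1/(m+1) := by
        apply one_div_le_one_div_of_le
        · positivity
        · have : (m:ℝ) ≤ n := Nat.cast_le.mpr hmn
          linarith
      linarith
    have hunion : (⋃ n : ℕ, {ω | ε ω ≤ c - 1/(n+1)}) = A := by
      ext ω
      simp only [Set.mem_iUnion, Set.mem_setOf_eq, hA]
      constructor
      · rintro ⟨n, hn⟩
        have : (0:ℝ) < 1/(n+1) := by positivity
        linarith
      · intro h
        obtain ⟨n, hn⟩ := exists_nat_one_div_lt (by linarith : (0:ℝ) < c - ε ω)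
        exact ⟨n, by linarith⟩
    have h1 : Filter.Tendsto (fun n : ℕ => μ {ω | ε ω ≤ c - 1/(n+1)}) Filter.atTop
        (nhds (μ A)) := by
      rw [← hunion]
      exact tendsto_measure_iUnion_atTop hmono
    have h2 : Filter.Tendsto (fun n : ℕ => (μ {ω | ε ω ≤ c - 1/(n+1)}).toReal) Filter.atTop
        (nhds (μ A).toReal) := (ENNReal.tendsto_toReal (measure_ne_top μ A)).comp h1
    have h3 : Filter.Tendsto (fun n : ℕ => F (c - 1/(n+1))) Filter.atTop (nhds (F c)) := by
      apply (hFc.tendsto c).comp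
      have h0 : Filter.Tendsto (fun n : ℕ => (1:ℝ)/(n+1)) Filter.atTop (nhds 0) :=
        tendsto_one_div_add_atTop_nhds_zero_nat
      simpa using Filter.Tendsto.sub (tendsto_const_nhds (x := c)) h0
    have h4 : (fun n : ℕ => (μ {ω | ε ω ≤ c - 1/(n+1)}).toReal)
        = fun n : ℕ => F (c - 1/(n+1)) := by
      funext n; rw [hFcdf]
    rw [h4] at h2
    exact tendsto_nhds_unique h2 h3
  rw [hψ, hint, hBval, hAval, hSb, if_neg (ne_of_lt hbU), if_neg (ne_of_gt hLb)]
  ring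
end

section
/- Assume in addition that F(0) = 1/2 and that there are constants C ≥ 0 and β̄ > 0 such that |x| ≤ C, |b| ≤ C, and f(z) ≥ β̄ for all real z with |z| ≤ max{2C, C + max{|l|, |u|}}. Then ψ(b)·(x − b) ≥ 0 and |ψ(b)| ≥ β̄ · |x − b|. -/
open MeasureTheory

/-- If `F(0)=1/2`, `|x| ≤ C`, `|b| ≤ C` and `f ≥ β̄` on the relevant range, then `ψ(b)(x−b) ≥ 0` and `|ψ(b)| ≥ β̄|x−b|`. -/
theorem stmt_9
    {Ω : Type*} {mΩ : MeasurableSpace Ω} {μ : Measure Ω} [IsProbabilityMeasure μ]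
    (ε : Ω → ℝ) (hε : Measurable ε)
    (F f : ℝ → ℝ)
    (hFcdf : ∀ z, F z = (μ {ω | ε ω ≤ z}).toReal)
    (hFderiv : ∀ z, HasDerivAt F (f z) z) (hfcont : Continuous f)
    (L l u U : ℝ) (hLl : L ≤ l) (hlu : l ≤ u) (huU : u ≤ U) (hLU : L < U)
    (S : ℝ → ℝ) (hS : ∀ z, S z = if z < l then L else if z ≤ u then z else U)
    (ψ : ℝ → ℝ → ℝ)
    (hψ : ∀ x b, ψ x b = (∫ ω, Real.sign (S (x + ε ω) - S b) ∂μ)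
        + F (u - b) * (if S b = U then 1 else 0)
        - (1 - F (l - b)) * (if S b = L then 1 else 0))
    (hF0 : F 0 = 1/2)
    (C βbar : ℝ) (hC : 0 ≤ C) (hβbar : 0 < βbar)
    (x b : ℝ) (hx : |x| ≤ C) (hbC : |b| ≤ C)
    (hflow : ∀ z : ℝ, |z| ≤ max (2*C) (C + max |l| |u|) → βbar ≤ f z) :
    0 ≤ ψ x b * (x - b) ∧ βbar * |x - b| ≤ |ψ x b| := by
  set m : ℝ := max (2*C) (C + max (|l|) (|u|)) with hm
  have hm0 : (0:ℝ) ≤ m := le_trans (by linarith) (le_max_left _ _)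
  have hmC : 2*C ≤ m := le_max_left _ _
  have hm2 : C + max (|l|) (|u|) ≤ m := le_max_right _ _
  have hml : |l| ≤ max (|l|) (|u|) := le_max_left _ _
  have hmu : |u| ≤ max (|l|) (|u|) := le_max_right _ _
  obtain ⟨hx1, hx2⟩ := abs_le.mp hx
  obtain ⟨hb1, hb2⟩ := abs_le.mp hbC
  have hlabs := abs_le.mp (le_refl |l|)
  have huabs := abs_le.mp (le_refl |u|)
  -- continuity of F
  have hFcont : Continuous F := by
    rw [continuous_iff_continuousAt]; exact fun z => (hFderiv z).continuousAt
  -- measurability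
  have hMeasLe : ∀ a : ℝ, MeasurableSet {ω | ε ω ≤ a} := fun a => hε measurableSet_Iic
  have hSmeas : Measurable S := by
    have hSe : S = fun z => if z < l then L else if z ≤ u then z else U := funext hS
    rw [hSe]
    exact Measurable.ite measurableSet_Iio measurable_const
      (Measurable.ite measurableSet_Iic measurable_id measurable_const)
  have hSxe : Measurable (fun ω => S (x + ε ω)) := hSmeas.comp (measurable_const.add hε)
  -- no atoms
  have hatom : ∀ a : ℝ, μ {ω | ε ω = a} = 0 := by
    intro a
    have hsub : ∀ δ : ℝ, 0 < δ → (μ {ω | ε ω = a}).toReal ≤ F a - F (a - δ) := by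
      intro δ hδ
      have hss : {ω | ε ω ≤ a - δ} ⊆ {ω | ε ω ≤ a} := by
        intro ω h
        simp only [Set.mem_setOf_eq] at *
        linarith
      have h1 : {ω | ε ω = a} ⊆ {ω | ε ω ≤ a} \ {ω | ε ω ≤ a - δ} := by
        intro ω hω
        simp only [Set.mem_setOf_eq, Set.mem_diff, not_le] at *
        constructor <;> [exact le_of_eq hω; linarith [hω.ge]]
      calc (μ {ω | ε ω = a}).toReal
          ≤ (μ ({ω | ε ω ≤ a} \ {ω | ε ω ≤ a - δ})).toReal :=
            ENNReal.toReal_mono (measure_ne_top μ _) (measure_mono h1)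
        _ = F a - F (a - δ) := by
            rw [measure_diff hss (hMeasLe _).nullMeasurableSet (measure_ne_top μ _),
              ENNReal.toReal_sub_of_le (measure_mono hss) (measure_ne_top μ _),
              hFcdf a, hFcdf (a - δ)]
    have hlim : Filter.Tendsto (fun n : ℕ => F a - F (a - 1/(n+1))) Filter.atTop (nhds 0) := by
      have h1 : Filter.Tendsto (fun n : ℕ => a - 1/((n:ℝ)+1)) Filter.atTop (nhds (a - 0)) :=
        tendsto_const_nhds.sub tendsto_one_div_add_atTop_nhds_zero_nat
      rw [sub_zero] at h1
      have h2 : Filter.Tendsto (fun n : ℕ => F (a - 1/((n:ℝ)+1))) Filter.atTop (nhds (F a)) :=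
        (hFcont.tendsto a).comp h1
      have h3 : Filter.Tendsto (fun n : ℕ => F a - F (a - 1/((n:ℝ)+1)))
          Filter.atTop (nhds (F a - F a)) :=
        Filter.Tendsto.sub tendsto_const_nhds h2
      simpa using h3
    have hle0 : (μ {ω | ε ω = a}).toReal ≤ 0 := by
      refine ge_of_tendsto' hlim fun n => hsub _ ?_
      positivity
    have h0 : (μ {ω | ε ω = a}).toReal = 0 := le_antisymm hle0 ENNReal.toReal_nonneg
    rcases (ENNReal.toReal_eq_zero_iff _).mp h0 with h | h
    · exact h
    · exact absurd h (measure_ne_top μ _)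
  -- basic probability identities
  have hle_eq : ∀ a : ℝ, μ {ω | ε ω ≤ a} = μ {ω | ε ω < a} := by
    intro a
    refine le_antisymm ?_ (measure_mono ?_)
    swap
    · intro ω h
      simp only [Set.mem_setOf_eq] at *
      linarith
    calc μ {ω | ε ω ≤ a} ≤ μ ({ω | ε ω < a} ∪ {ω | ε ω = a}) := by
          refine measure_mono ?_
          intro ω h
          simp only [Set.mem_setOf_eq, Set.mem_union] at *
          exact h.lt_or_eq
      _ ≤ μ {ω | ε ω < a} + μ {ω | ε ω = a} := measure_union_le _ _
      _ = μ {ω | ε ω < a} := by rw [hatom, add_zero]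
  have hge_eq : ∀ a : ℝ, μ {ω | a ≤ ε ω} = μ {ω | a < ε ω} := by
    intro a
    refine le_antisymm ?_ (measure_mono ?_)
    swap
    · intro ω h
      simp only [Set.mem_setOf_eq] at *
      linarith
    calc μ {ω | a ≤ ε ω} ≤ μ ({ω | a < ε ω} ∪ {ω | ε ω = a}) := by
          refine measure_mono ?_
          intro ω h
          simp only [Set.mem_setOf_eq, Set.mem_union] at *
          exact h.lt_or_eq.imp id (fun e => e.symm)
      _ ≤ μ {ω | a < ε ω} + μ {ω | ε ω = a} := measure_union_le _ _
      _ = μ {ω | a < ε ω} := by rw [hatom, add_zero]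
  have hPlt : ∀ a : ℝ, (μ {ω | ε ω < a}).toReal = F a := by
    intro a; rw [← hle_eq]; exact (hFcdf a).symm
  have hPgt : ∀ a : ℝ, (μ {ω | a < ε ω}).toReal = 1 - F a := by
    intro a
    have hc : {ω | a < ε ω} = {ω | ε ω ≤ a}ᶜ := by
      ext ω; simp [Set.mem_setOf_eq, not_le]
    rw [hc, measure_compl (hMeasLe a) (measure_ne_top μ _), measure_univ,
      ENNReal.toReal_sub_of_le prob_le_one (by simp), ENNReal.toReal_one, hFcdf a]
  have hPge : ∀ a : ℝ, (μ {ω | a ≤ ε ω}).toReal = 1 - F a := by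
    intro a; rw [hge_eq]; exact hPgt a
  -- the integral of a sign
  have hInt : ∀ c : ℝ, (∫ ω, Real.sign (S (x + ε ω) - c) ∂μ)
      = (μ {ω | c < S (x + ε ω)}).toReal - (μ {ω | S (x + ε ω) < c}).toReal := by
    intro c
    have hA : MeasurableSet {ω | c < S (x + ε ω)} := measurableSet_lt measurable_const hSxe
    have hB : MeasurableSet {ω | S (x + ε ω) < c} := measurableSet_lt hSxe measurable_const
    have heq : ∀ ω, Real.sign (S (x + ε ω) - c)
        = Set.indicator {ω | c < S (x + ε ω)} (fun _ => (1:ℝ)) ω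
          - Set.indicator {ω | S (x + ε ω) < c} (fun _ => (1:ℝ)) ω := by
      intro ω
      rcases lt_trichotomy (S (x + ε ω)) c with h | h | h
      · rw [Real.sign_of_neg (by linarith),
          Set.indicator_of_notMem (by simp only [Set.mem_setOf_eq, not_lt]; exact h.le),
          Set.indicator_of_mem (show ω ∈ {ω | S (x + ε ω) < c} from h)]
        norm_num
      · rw [show S (x + ε ω) - c = 0 by linarith, Real.sign_zero,
          Set.indicator_of_notMem (by simp only [Set.mem_setOf_eq, not_lt]; exact h.le),
          Set.indicator_of_notMem (by simp only [Set.mem_setOf_eq, not_lt]; exact h.ge)]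
        norm_num
      · rw [Real.sign_of_pos (by linarith),
          Set.indicator_of_mem (show ω ∈ {ω | c < S (x + ε ω)} from h),
          Set.indicator_of_notMem (by simp only [Set.mem_setOf_eq, not_lt]; exact h.le)]
        norm_num
    have h1 : (∫ ω, Real.sign (S (x + ε ω) - c) ∂μ)
        = ∫ ω, (Set.indicator {ω | c < S (x + ε ω)} (fun _ => (1:ℝ)) ω
          - Set.indicator {ω | S (x + ε ω) < c} (fun _ => (1:ℝ)) ω) ∂μ :=
      integral_congr_ae (Filter.Eventually.of_forall heq)
    rw [h1, integral_sub ((integrable_const (1:ℝ)).indicator hA)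
      ((integrable_const (1:ℝ)).indicator hB),
      integral_indicator_const (1:ℝ) hA, integral_indicator_const (1:ℝ) hB]
    simp [smul_eq_mul]
    rfl
  -- mean value theorem
  have hMVT : ∀ p q : ℝ, |p| ≤ m → |q| ≤ m → ∃ ξ : ℝ, |ξ| ≤ m ∧ F p - F q = f ξ * (p - q) := by
    intro p q hp hq
    obtain ⟨hp1, hp2⟩ := abs_le.mp hp
    obtain ⟨hq1, hq2⟩ := abs_le.mp hq
    rcases lt_trichotomy q p with h | h | h
    · obtain ⟨ξ, hξ, hslope⟩ := exists_hasDerivAt_eq_slope F f h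
        (hFcont.continuousOn) (fun z _ => hFderiv z)
      obtain ⟨hξ1, hξ2⟩ := hξ
      refine ⟨ξ, abs_le.mpr ⟨by linarith, by linarith⟩, ?_⟩
      rw [hslope, div_mul_cancel₀ _ (sub_ne_zero.mpr h.ne')]
    · exact ⟨0, by simpa using hm0, by rw [h]; ring⟩
    · obtain ⟨ξ, hξ, hslope⟩ := exists_hasDerivAt_eq_slope F f h
        (hFcont.continuousOn) (fun z _ => hFderiv z)
      obtain ⟨hξ1, hξ2⟩ := hξ
      refine ⟨ξ, abs_le.mpr ⟨by linarith, by linarith⟩, ?_⟩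
      have : F q - F p = f ξ * (q - p) := by
        rw [hslope, div_mul_cancel₀ _ (sub_ne_zero.mpr h.ne')]
      linarith [this, (by ring : f ξ * (q - p) = - (f ξ * (p - q)))]
  -- reduction lemma
  have hfinish : ∀ (k p q : ℝ), 1 ≤ k → ψ x b = k * (F p - F q) → p - q = x - b →
      |p| ≤ m → |q| ≤ m → 0 ≤ ψ x b * (x - b) ∧ βbar * |x - b| ≤ |ψ x b| := by
    intro k p q hk hψeq hpq hp hq
    obtain ⟨ξ, hξm, hFF⟩ := hMVT p q hp hq
    have hfξ : βbar ≤ f ξ := hflow ξ hξm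
    rw [hψeq, hFF, hpq]
    constructor
    · have he : k * (f ξ * (x - b)) * (x - b) = (k * f ξ) * (x - b)^2 := by ring
      rw [he]
      exact mul_nonneg (mul_nonneg (by linarith) (by linarith)) (sq_nonneg _)
    · rw [abs_mul, abs_mul, abs_of_pos (show (0:ℝ) < k by linarith),
        abs_of_pos (show (0:ℝ) < f ξ by linarith)]
      calc βbar * |x - b| ≤ f ξ * |x - b| := mul_le_mul_of_nonneg_right hfξ (abs_nonneg _)
        _ ≤ k * (f ξ * |x - b|) := le_mul_of_one_le_left (mul_nonneg (by linarith) (abs_nonneg _)) hk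
  -- case analysis on S b
  by_cases hbL : S b = L
  · -- S b = L : ψ = F (l - b) - F (l - x)
    have hA1 : {ω | l - x < ε ω} ⊆ {ω | S b < S (x + ε ω)} := by
      intro ω hω
      simp only [Set.mem_setOf_eq] at *
      rw [hbL, hS (x + ε ω)]
      split_ifs with h1 h2
      · linarith
      · linarith
      · exact hLU
    have hA2 : {ω | S b < S (x + ε ω)} ⊆ {ω | l - x ≤ ε ω} := by
      intro ω hω
      simp only [Set.mem_setOf_eq] at *
      by_contra hc
      push_neg at hc
      rw [hbL, hS (x + ε ω), if_pos (by linarith)] at hω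
      exact lt_irrefl L hω
    have hAval : (μ {ω | S b < S (x + ε ω)}).toReal = 1 - F (l - x) := by
      have h1 : μ {ω | S b < S (x + ε ω)} = μ {ω | l - x < ε ω} :=
        le_antisymm ((measure_mono hA2).trans_eq (hge_eq (l - x))) (measure_mono hA1)
      rw [h1, hPgt]
    have hBempty : {ω | S (x + ε ω) < S b} = ∅ := by
      ext ω
      simp only [Set.mem_setOf_eq, Set.mem_empty_iff_false, iff_false, not_lt, hbL,
        hS (x + ε ω)]
      split_ifs <;> linarith
    have hUne : ¬ S b = U := by rw [hbL]; exact ne_of_lt hLU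
    have hψval : ψ x b = 1 * (F (l - b) - F (l - x)) := by
      rw [hψ, hInt, hAval, hBempty, measure_empty, if_neg hUne, if_pos hbL]
      simp only [ENNReal.toReal_zero, mul_zero, mul_one, add_zero, sub_zero]
      ring
    refine hfinish 1 (l - b) (l - x) le_rfl hψval (by ring) ?_ ?_
    · exact abs_le.mpr ⟨by linarith, by linarith⟩
    · exact abs_le.mpr ⟨by linarith, by linarith⟩
  · by_cases hbU : S b = U
    · -- S b = U : ψ = F (u - b) - F (u - x)
      have hAempty : {ω | S b < S (x + ε ω)} = ∅ := by
        ext ω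
        simp only [Set.mem_setOf_eq, Set.mem_empty_iff_false, iff_false, not_lt, hbU,
          hS (x + ε ω)]
        split_ifs <;> linarith
      have hB1 : {ω | ε ω < u - x} ⊆ {ω | S (x + ε ω) < S b} := by
        intro ω hω
        simp only [Set.mem_setOf_eq] at *
        rw [hbU, hS (x + ε ω)]
        split_ifs with h1 h2
        · exact hLU
        · linarith
        · linarith
      have hB2 : {ω | S (x + ε ω) < S b} ⊆ {ω | ε ω ≤ u - x} := by
        intro ω hω
        simp only [Set.mem_setOf_eq] at *
        by_contra hc
        push_neg at hc
        rw [hbU, hS (x + ε ω), if_neg (by push_neg; linarith), if_neg (by linarith)] at hω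
        exact lt_irrefl U hω
      have hBval : (μ {ω | S (x + ε ω) < S b}).toReal = F (u - x) := by
        have h1 : μ {ω | S (x + ε ω) < S b} = μ {ω | ε ω < u - x} :=
          le_antisymm ((measure_mono hB2).trans_eq (hle_eq (u - x))) (measure_mono hB1)
        rw [h1, hPlt]
      have hψval : ψ x b = 1 * (F (u - b) - F (u - x)) := by
        rw [hψ, hInt, hAempty, measure_empty, hBval, if_pos hbU, if_neg hbL]
        simp only [ENNReal.toReal_zero, mul_zero, mul_one, add_zero, sub_zero]
        ring
      refine hfinish 1 (u - b) (u - x) le_rfl hψval (by ring) ?_ ?_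
      · exact abs_le.mpr ⟨by linarith, by linarith⟩
      · exact abs_le.mpr ⟨by linarith, by linarith⟩
    · -- S b = b with L < b < U
      have hlb : l ≤ b := by
        by_contra hc
        push_neg at hc
        exact hbL (by rw [hS b, if_pos hc])
      have hbu : b ≤ u := by
        by_contra hc
        push_neg at hc
        exact hbU (by rw [hS b, if_neg (by push_neg; linarith), if_neg (by push_neg; exact hc)])
      have hSbb : S b = b := by rw [hS b, if_neg (not_lt.mpr hlb), if_pos hbu]
      have hLb : L < b := lt_of_le_of_ne (hLl.trans hlb) (fun h => hbL (hSbb.trans h.symm))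
      have hbU2 : b < U := lt_of_le_of_ne (hbu.trans huU) (fun h => hbU (hSbb.trans h))
      have hAeq : {ω | S b < S (x + ε ω)} = {ω | b - x < ε ω} := by
        ext ω
        simp only [Set.mem_setOf_eq, hSbb]
        constructor
        · intro h
          by_contra hc
          push_neg at hc
          have hzb : S (x + ε ω) ≤ b := by
            rw [hS (x + ε ω)]; split_ifs <;> linarith
          linarith
        · intro h
          rw [hS (x + ε ω)]
          split_ifs with h1 h2
          · linarith
          · linarith
          · exact hbU2
      have hBeq : {ω | S (x + ε ω) < S b} = {ω | ε ω < b - x} := by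
        ext ω
        simp only [Set.mem_setOf_eq, hSbb]
        constructor
        · intro h
          by_contra hc
          push_neg at hc
          have hzb : b ≤ S (x + ε ω) := by
            rw [hS (x + ε ω)]; split_ifs <;> linarith
          linarith
        · intro h
          rw [hS (x + ε ω)]
          split_ifs with h1 h2
          · exact hLb
          · linarith
          · linarith
      have hψval : ψ x b = 2 * (F 0 - F (b - x)) := by
        rw [hψ, hInt, hAeq, hBeq, hPgt, hPlt, if_neg hbU, if_neg hbL, hF0]
        ring
      refine hfinish 2 0 (b - x) (by norm_num) hψval (by ring) ?_ ?_
      · simpa using hm0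
      · exact abs_le.mpr ⟨by linarith, by linarith⟩
end

section
/- Assume in addition that F(0) = 1/2, that |x| ≤ C, |b| ≤ C, |b̄| ≤ C for a constant C ≥ 0 and a further real number b̄, and let M̄ = sup{ f(z) : |z| ≤ max{2C, C + max{|l|, |u|}} }. Define the secant gain β as follows: if S(b) = L, then β = (F(l − b) − F(l − b̄))/(b̄ − b) when b̄ ≠ b and β = f(l − b) when b̄ = b; if L < S(b) < U, then β = (1 − 2F(b − b̄))/(b̄ − b) when b̄ ≠ b and β = 2f(0) when b̄ = b; if S(b) = U, then β = (F(u − b) − F(u − b̄))/(b̄ − b) when b̄ ≠ b and β = f(u − b) when b̄ = b. Then |ψ(b) − β·(x − b)| ≤ 4M̄·|x − b̄|. -/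
open MeasureTheory

lemma my_integral_sign {Ω : Type*} [MeasurableSpace Ω] (μ : Measure Ω) [IsProbabilityMeasure μ]
    (h : Ω → ℝ) (hm : Measurable h) :
    ∫ ω, Real.sign (h ω) ∂μ
      = (μ {ω | 0 < h ω}).toReal - (μ {ω | h ω < 0}).toReal := by
  have hs : MeasurableSet {ω | 0 < h ω} := measurableSet_lt measurable_const hm
  have ht : MeasurableSet {ω | h ω < 0} := measurableSet_lt hm measurable_const
  have heq : (fun ω => Real.sign (h ω))
      = fun ω => Set.indicator {ω | 0 < h ω} (fun _ => (1:ℝ)) ω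
          - Set.indicator {ω | h ω < 0} (fun _ => (1:ℝ)) ω := by
    funext ω
    by_cases h1 : h ω < 0
    · rw [Real.sign_of_neg h1]
      simp [Set.indicator, h1, asymm h1]
    · by_cases h2 : 0 < h ω
      · rw [Real.sign_of_pos h2]
        simp [Set.indicator, h1, h2]
      · have : h ω = 0 := le_antisymm (not_lt.mp h2) (not_lt.mp h1)
        rw [this, Real.sign_zero]
        simp [Set.indicator, h1, h2]
  rw [heq, integral_sub ((integrable_const (1:ℝ)).indicator hs) ((integrable_const (1:ℝ)).indicator ht),
    integral_indicator_const (1:ℝ) hs, integral_indicator_const (1:ℝ) ht]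
  simp [smul_eq_mul]
  rfl

lemma my_key (G G' : ℝ → ℝ) (hG : ∀ z, HasDerivAt G (G' z) z)
    (K C x b bbar : ℝ) (hx : |x| ≤ C) (hb : |b| ≤ C) (hbb : |bbar| ≤ C)
    (hbound : ∀ z, |z| ≤ C → |G' z| ≤ K)
    (hGb : G b = 0)
    (β : ℝ) (hβ : β = if bbar = b then G' b else (G bbar - G b) / (bbar - b)) :
    |G x - β * (x - b)| ≤ 2 * K * |x - bbar| := by
  have hlip : ∀ p q : ℝ, |p| ≤ C → |q| ≤ C → |G q - G p| ≤ K * |q - p| := by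
    intro p q hp hq
    have := (convex_Icc (-C) C).norm_image_sub_le_of_norm_hasDerivWithin_le
      (f := G) (f' := G') (fun z _ => (hG z).hasDerivWithinAt)
      (fun z hz => by rw [Real.norm_eq_abs]; exact hbound z (abs_le.mpr hz))
      (abs_le.mp hp) (abs_le.mp hq)
    simpa [Real.norm_eq_abs] using this
  have hβle : |β| ≤ K := by
    rw [hβ]; split_ifs with h
    · exact hbound b hb
    · rw [abs_div, div_le_iff₀ (abs_pos.mpr (sub_ne_zero.mpr h))]
      exact hlip b bbar hb hbb
  have hGbbar : G bbar = β * (bbar - b) := by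
    rw [hβ]; split_ifs with h
    · rw [h, hGb]; ring
    · rw [div_mul_cancel₀ _ (sub_ne_zero.mpr h), hGb, sub_zero]
  have hid : G x - β * (x - b) = (G x - G bbar) + β * (bbar - x) := by
    linear_combination hGbbar
  rw [hid]
  calc |(G x - G bbar) + β * (bbar - x)| ≤ |G x - G bbar| + |β * (bbar - x)| := abs_add_le _ _
    _ ≤ K * |x - bbar| + K * |x - bbar| := by
        have h1 := hlip bbar x hbb hx
        have h2 : |β * (bbar - x)| ≤ K * |x - bbar| := by
          rw [abs_mul, abs_sub_comm bbar x]
          exact mul_le_mul_of_nonneg_right hβle (abs_nonneg _)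
        linarith
    _ = 2 * K * |x - bbar| := by ring

/-- With the secant gain `β`, `|ψ(b) − β(x−b)| ≤ 4M̄|x − b̄|`. -/
theorem stmt_10
    {Ω : Type*} {mΩ : MeasurableSpace Ω} {μ : Measure Ω} [IsProbabilityMeasure μ]
    (ε : Ω → ℝ) (hε : Measurable ε)
    (F f : ℝ → ℝ)
    (hFcdf : ∀ z, F z = (μ {ω | ε ω ≤ z}).toReal)
    (hFderiv : ∀ z, HasDerivAt F (f z) z) (hfcont : Continuous f)
    (L l u U : ℝ) (hLl : L ≤ l) (hlu : l ≤ u) (huU : u ≤ U) (hLU : L < U)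
    (S : ℝ → ℝ) (hS : ∀ z, S z = if z < l then L else if z ≤ u then z else U)
    (ψ : ℝ → ℝ → ℝ)
    (hψ : ∀ x b, ψ x b = (∫ ω, Real.sign (S (x + ε ω) - S b) ∂μ)
        + F (u - b) * (if S b = U then 1 else 0)
        - (1 - F (l - b)) * (if S b = L then 1 else 0))
    (hF0 : F 0 = 1/2)
    (C : ℝ) (hC : 0 ≤ C)
    (x b bbar : ℝ) (hx : |x| ≤ C) (hbC : |b| ≤ C) (hbbarC : |bbar| ≤ C)
    (Mbar : ℝ) (hMbar : Mbar = sSup (f '' {z : ℝ | |z| ≤ max (2*C) (C + max |l| |u|)}))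
    (β : ℝ)
    (hβ : β = if S b = L then
            (if bbar = b then f (l - b) else (F (l - b) - F (l - bbar)) / (bbar - b))
          else if S b = U then
            (if bbar = b then f (u - b) else (F (u - b) - F (u - bbar)) / (bbar - b))
          else
            (if bbar = b then 2 * f 0 else (1 - 2 * F (b - bbar)) / (bbar - b))) :
    |ψ x b - β * (x - b)| ≤ 4 * Mbar * |x - bbar| := by
  -- basic facts about F
  have hFmono : Monotone F := by
    intro a c hac
    rw [hFcdf a, hFcdf c]
    exact ENNReal.toReal_mono (measure_ne_top μ _)
      (measure_mono fun ω hω => le_trans hω hac)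
  have hFcont : Continuous F := continuous_iff_continuousAt.mpr fun z => (hFderiv z).continuousAt
  have hfnn : ∀ z, 0 ≤ f z := by
    intro z
    have ht := hasDerivAt_iff_tendsto_slope.mp (hFderiv z)
    refine ge_of_tendsto ht ?_
    filter_upwards with c
    rcases lt_trichotomy c z with h | h | h
    · rw [slope_def_field, show F c - F z = -(F z - F c) by ring,
        show c - z = -(z - c) by ring, neg_div_neg_eq]
      exact div_nonneg (by simp [hFmono h.le]) (by linarith)
    · simp [h, slope_def_field]
    · rw [slope_def_field]
      exact div_nonneg (by simp [hFmono h.le]) (by linarith)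
  -- measurable sets
  have hmle : ∀ c : ℝ, MeasurableSet {ω | ε ω ≤ c} := fun c => measurableSet_le hε measurable_const
  have hmlt : ∀ c : ℝ, MeasurableSet {ω | ε ω < c} := fun c => measurableSet_lt hε measurable_const
  have hmeq : ∀ c : ℝ, MeasurableSet {ω | ε ω = c} := fun c => hε (measurableSet_singleton c)
  have htoe : ∀ c : ℝ, (μ {ω | ε ω ≤ c}).toReal = F c := fun c => (hFcdf c).symm
  -- no atoms
  have hatom : ∀ c : ℝ, (μ {ω | ε ω = c}).toReal = 0 := by
    intro c
    refine le_antisymm ?_ ENNReal.toReal_nonneg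
    refine le_of_forall_pos_le_add ?_
    intro e he
    obtain ⟨δ, hδ, hδ2⟩ := Metric.continuousAt_iff.mp (hFcont.continuousAt (x := c)) e he
    have h1 : dist (c - δ/2) c < δ := by
      rw [Real.dist_eq]
      rw [abs_of_nonpos (by linarith)]
      linarith
    have h2 := hδ2 h1
    rw [Real.dist_eq] at h2
    have h3 : F c - F (c - δ/2) < e := by
      rcases abs_lt.mp h2 with ⟨ha, _⟩
      linarith
    have hdisj : Disjoint {ω | ε ω = c} {ω | ε ω ≤ c - δ/2} := by
      rw [Set.disjoint_left]
      intro ω hω1 hω2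
      simp only [Set.mem_setOf_eq] at hω1 hω2
      linarith [hω1 ▸ hω2]
    have hsub : μ {ω | ε ω = c} + μ {ω | ε ω ≤ c - δ/2} ≤ μ {ω | ε ω ≤ c} := by
      rw [← measure_union hdisj (hmle _)]
      refine measure_mono fun ω hω => ?_
      rcases hω with h | h
      · simp only [Set.mem_setOf_eq] at h ⊢; exact le_of_eq h
      · simp only [Set.mem_setOf_eq] at h ⊢; linarith
    have h4 := ENNReal.toReal_mono (measure_ne_top μ _) hsub
    rw [ENNReal.toReal_add (measure_ne_top μ _) (measure_ne_top μ _), htoe, htoe] at h4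
    linarith
  have hlt' : ∀ c : ℝ, (μ {ω | ε ω < c}).toReal = F c := by
    intro c
    have hu : {ω | ε ω ≤ c} = {ω | ε ω < c} ∪ {ω | ε ω = c} := by
      ext ω; simp [le_iff_lt_or_eq]
    have hd : Disjoint {ω | ε ω < c} {ω | ε ω = c} := by
      rw [Set.disjoint_left]
      intro ω h1 h2
      simp only [Set.mem_setOf_eq] at h1 h2
      exact absurd h2 (ne_of_lt h1)
    have h5 : (μ {ω | ε ω ≤ c}).toReal
        = (μ {ω | ε ω < c}).toReal + (μ {ω | ε ω = c}).toReal := by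
      rw [hu, measure_union hd (hmeq c),
        ENNReal.toReal_add (measure_ne_top μ _) (measure_ne_top μ _)]
    rw [htoe, hatom] at h5
    linarith
  have hgt : ∀ c : ℝ, (μ {ω | c < ε ω}).toReal = 1 - F c := by
    intro c
    have hcompl : {ω | c < ε ω} = {ω | ε ω ≤ c}ᶜ := by
      ext ω; simp [not_le]
    rw [hcompl, prob_compl_eq_one_sub (hmle c),
      ENNReal.toReal_sub_of_le prob_le_one ENNReal.one_ne_top, ENNReal.toReal_one, htoe]
  have hge : ∀ c : ℝ, (μ {ω | c ≤ ε ω}).toReal = 1 - F c := by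
    intro c
    have hcompl : {ω | c ≤ ε ω} = {ω | ε ω < c}ᶜ := by
      ext ω; simp [not_lt]
    rw [hcompl, prob_compl_eq_one_sub (hmlt c),
      ENNReal.toReal_sub_of_le prob_le_one ENNReal.one_ne_top, ENNReal.toReal_one, hlt']
  -- Mbar facts
  have hR0 : 0 ≤ max (2*C) (C + max |l| |u|) := le_trans (by linarith) (le_max_left _ _)
  have hMub : ∀ z, |z| ≤ max (2*C) (C + max |l| |u|) → f z ≤ Mbar := by
    intro z hz
    rw [hMbar]
    refine le_csSup ?_ ⟨z, hz, rfl⟩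
    have hset : {z : ℝ | |z| ≤ max (2*C) (C + max |l| |u|)}
        = Set.Icc (-(max (2*C) (C + max |l| |u|))) (max (2*C) (C + max |l| |u|)) := by
      ext w; simp only [Set.mem_setOf_eq, Set.mem_Icc, abs_le]
    rw [hset]
    exact (isCompact_Icc.image hfcont).bddAbove
  have hM0 : 0 ≤ Mbar := le_trans (hfnn 0) (hMub 0 (by simpa using hR0))
  -- S facts
  have hSrange : ∀ t, L ≤ S t ∧ S t ≤ U := by
    intro t; rw [hS t]; split_ifs <;> constructor <;> linarith
  have hSmeas : Measurable S := by
    have hSe : S = fun z => if z < l then L else if z ≤ u then z else U := funext hS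
    rw [hSe]
    exact Measurable.ite (measurableSet_lt measurable_id measurable_const) measurable_const
      (Measurable.ite (measurableSet_le measurable_id measurable_const) measurable_id
        measurable_const)
  have hmh : Measurable fun ω => S (x + ε ω) - S b :=
    (hSmeas.comp (measurable_const.add hε)).sub measurable_const
  have hint : ∫ ω, Real.sign (S (x + ε ω) - S b) ∂μ
      = (μ {ω | 0 < S (x + ε ω) - S b}).toReal - (μ {ω | S (x + ε ω) - S b < 0}).toReal :=
    my_integral_sign μ _ hmh
  by_cases hA : S b = L
  · -- bottom case
    have hnotU : S b ≠ U := by rw [hA]; exact ne_of_lt hLU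
    have hnegset : {ω | S (x + ε ω) - S b < 0} = (∅ : Set Ω) := by
      ext ω
      simp only [Set.mem_setOf_eq, Set.mem_empty_iff_false, iff_false, not_lt, hA, sub_nonneg]
      exact (hSrange _).1
    have hposval : (μ {ω | 0 < S (x + ε ω) - S b}).toReal = 1 - F (l - x) := by
      rcases eq_or_lt_of_le hLl with hLeq | hLlt
      · have hset : {ω | 0 < S (x + ε ω) - S b} = {ω | l - x < ε ω} := by
          ext ω
          rw [Set.mem_setOf_eq, Set.mem_setOf_eq, hA, sub_pos, hS (x + ε ω)]
          split_ifs with h1 h2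
          · constructor <;> intro <;> linarith
          · push_neg at h1; constructor <;> intro <;> linarith
          · push_neg at h1 h2; constructor <;> intro <;> linarith
        rw [hset]; exact hgt _
      · have hset : {ω | 0 < S (x + ε ω) - S b} = {ω | l - x ≤ ε ω} := by
          ext ω
          rw [Set.mem_setOf_eq, Set.mem_setOf_eq, hA, sub_pos, hS (x + ε ω)]
          split_ifs with h1 h2
          · constructor <;> intro <;> linarith
          · push_neg at h1; constructor <;> intro <;> linarith
          · push_neg at h1 h2; constructor <;> intro <;> linarith
        rw [hset]; exact hge _
    have hψval : ψ x b = F (l - b) - F (l - x) := by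
      rw [hψ x b, hint, hposval, hnegset, if_pos hA, if_neg hnotU]
      simp only [measure_empty, ENNReal.toReal_zero, mul_zero, mul_one]
      ring
    have hG : ∀ z : ℝ, HasDerivAt (fun z => F (l - b) - F (l - z)) (f (l - z)) z := by
      intro z
      have h1 : HasDerivAt (fun z : ℝ => l - z) (-1) z := (hasDerivAt_id z).const_sub l
      have h2 : HasDerivAt (fun z : ℝ => F (l - z)) (f (l - z) * (-1)) z :=
        (hFderiv (l - z)).comp z h1
      have h3 := h2.const_sub (F (l - b))
      exact h3.congr_deriv (by ring)
    have hbound : ∀ z, |z| ≤ C → |f (l - z)| ≤ 2 * Mbar := by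
      intro z hz
      rw [abs_of_nonneg (hfnn _)]
      have habs : |l - z| ≤ max (2*C) (C + max |l| |u|) := by
        calc |l - z| = |l + -z| := by rw [sub_eq_add_neg]
          _ ≤ |l| + |-z| := abs_add_le _ _
          _ = |l| + |z| := by rw [abs_neg]
          _ ≤ max |l| |u| + C := add_le_add (le_max_left _ _) hz
          _ ≤ max (2*C) (C + max |l| |u|) := by rw [add_comm]; exact le_max_right _ _
      linarith [hMub _ habs]
    have hβ' : β = if bbar = b then f (l - b)
        else ((F (l - b) - F (l - bbar)) - (F (l - b) - F (l - b))) / (bbar - b) := by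
      rw [hβ, if_pos hA]
      split_ifs with h
      · rfl
      · congr 1; ring
    have hkey := my_key (fun z => F (l - b) - F (l - z)) (fun z => f (l - z)) hG (2 * Mbar)
      C x b bbar hx hbC hbbarC hbound (by simp) β hβ'
    rw [hψval]
    calc |F (l - b) - F (l - x) - β * (x - b)| ≤ 2 * (2 * Mbar) * |x - bbar| := hkey
      _ = 4 * Mbar * |x - bbar| := by ring
  · by_cases hCU : S b = U
    · -- top case
      have hposset : {ω | 0 < S (x + ε ω) - S b} = (∅ : Set Ω) := by
        ext ω
        simp only [Set.mem_setOf_eq, Set.mem_empty_iff_false, iff_false, not_lt, hCU, sub_nonpos]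
        exact (hSrange _).2
      have hnegval : (μ {ω | S (x + ε ω) - S b < 0}).toReal = F (u - x) := by
        rcases eq_or_lt_of_le huU with huEq | huLt
        · have hset : {ω | S (x + ε ω) - S b < 0} = {ω | ε ω < u - x} := by
            ext ω
            rw [Set.mem_setOf_eq, Set.mem_setOf_eq, hCU, sub_neg, hS (x + ε ω)]
            split_ifs with h1 h2
            · constructor <;> intro <;> linarith
            · push_neg at h1; constructor <;> intro <;> linarith
            · push_neg at h1 h2; constructor <;> intro <;> linarith
          rw [hset]; exact hlt' _
        · have hset : {ω | S (x + ε ω) - S b < 0} = {ω | ε ω ≤ u - x} := by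
            ext ω
            rw [Set.mem_setOf_eq, Set.mem_setOf_eq, hCU, sub_neg, hS (x + ε ω)]
            split_ifs with h1 h2
            · constructor <;> intro <;> linarith
            · push_neg at h1; constructor <;> intro <;> linarith
            · push_neg at h1 h2; constructor <;> intro <;> linarith
          rw [hset]; exact htoe _
      have hψval : ψ x b = F (u - b) - F (u - x) := by
        rw [hψ x b, hint, hnegval, hposset, if_pos hCU, if_neg hA]
        simp only [measure_empty, ENNReal.toReal_zero, mul_zero, mul_one]
        ring
      have hG : ∀ z : ℝ, HasDerivAt (fun z => F (u - b) - F (u - z)) (f (u - z)) z := by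
        intro z
        have h1 : HasDerivAt (fun z : ℝ => u - z) (-1) z := (hasDerivAt_id z).const_sub u
        have h2 : HasDerivAt (fun z : ℝ => F (u - z)) (f (u - z) * (-1)) z :=
          (hFderiv (u - z)).comp z h1
        have h3 := h2.const_sub (F (u - b))
        exact h3.congr_deriv (by ring)
      have hbound : ∀ z, |z| ≤ C → |f (u - z)| ≤ 2 * Mbar := by
        intro z hz
        rw [abs_of_nonneg (hfnn _)]
        have habs : |u - z| ≤ max (2*C) (C + max |l| |u|) := by
          calc |u - z| = |u + -z| := by rw [sub_eq_add_neg]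
            _ ≤ |u| + |-z| := abs_add_le _ _
            _ = |u| + |z| := by rw [abs_neg]
            _ ≤ max |l| |u| + C := add_le_add (le_max_right _ _) hz
            _ ≤ max (2*C) (C + max |l| |u|) := by rw [add_comm]; exact le_max_right _ _
        linarith [hMub _ habs]
      have hβ' : β = if bbar = b then f (u - b)
          else ((F (u - b) - F (u - bbar)) - (F (u - b) - F (u - b))) / (bbar - b) := by
        rw [hβ, if_neg hA, if_pos hCU]
        split_ifs with h
        · rfl
        · congr 1; ring
      have hkey := my_key (fun z => F (u - b) - F (u - z)) (fun z => f (u - z)) hG (2 * Mbar)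
        C x b bbar hx hbC hbbarC hbound (by simp) β hβ'
      rw [hψval]
      calc |F (u - b) - F (u - x) - β * (x - b)| ≤ 2 * (2 * Mbar) * |x - bbar| := hkey
        _ = 4 * Mbar * |x - bbar| := by ring
    · -- interior case
      have hble : ¬ b < l := fun h => hA (by rw [hS b, if_pos h])
      have hbu : b ≤ u := by
        by_contra h
        exact hCU (by rw [hS b, if_neg hble, if_neg h])
      have hbl : l ≤ b := not_lt.mp hble
      have hSb : S b = b := by rw [hS b, if_neg hble, if_pos hbu]
      have hLb : L < b := lt_of_le_of_ne (le_trans hLl hbl) fun h => hA (by rw [hSb, ← h])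
      have hbU : b < U := lt_of_le_of_ne (le_trans hbu huU) fun h => hCU (by rw [hSb, h])
      have hposset : {ω | 0 < S (x + ε ω) - S b} = {ω | b - x < ε ω} := by
        ext ω
        rw [Set.mem_setOf_eq, Set.mem_setOf_eq, hSb, sub_pos, hS (x + ε ω)]
        split_ifs with h1 h2
        · constructor <;> intro <;> linarith
        · push_neg at h1; constructor <;> intro <;> linarith
        · push_neg at h1 h2; constructor <;> intro <;> linarith
      have hnegset : {ω | S (x + ε ω) - S b < 0} = {ω | ε ω < b - x} := by
        ext ω
        rw [Set.mem_setOf_eq, Set.mem_setOf_eq, hSb, sub_neg, hS (x + ε ω)]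
        split_ifs with h1 h2
        · constructor <;> intro <;> linarith
        · push_neg at h1; constructor <;> intro <;> linarith
        · push_neg at h1 h2; constructor <;> intro <;> linarith
      have hψval : ψ x b = 1 - 2 * F (b - x) := by
        rw [hψ x b, hint, hposset, hnegset, if_neg hA, if_neg hCU, hgt, hlt']
        ring
      have hG : ∀ z : ℝ, HasDerivAt (fun z => 1 - 2 * F (b - z)) (2 * f (b - z)) z := by
        intro z
        have h1 : HasDerivAt (fun z : ℝ => b - z) (-1) z := (hasDerivAt_id z).const_sub b
        have h2 : HasDerivAt (fun z : ℝ => F (b - z)) (f (b - z) * (-1)) z :=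
          (hFderiv (b - z)).comp z h1
        have h3 := (h2.const_mul (2:ℝ)).const_sub 1
        exact h3.congr_deriv (by ring)
      have hbound : ∀ z, |z| ≤ C → |2 * f (b - z)| ≤ 2 * Mbar := by
        intro z hz
        rw [abs_mul, abs_of_nonneg (hfnn _)]
        have habs : |b - z| ≤ max (2*C) (C + max |l| |u|) := by
          calc |b - z| = |b + -z| := by rw [sub_eq_add_neg]
            _ ≤ |b| + |-z| := abs_add_le _ _
            _ = |b| + |z| := by rw [abs_neg]
            _ ≤ C + C := add_le_add hbC hz
            _ = 2 * C := by ring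
            _ ≤ max (2*C) (C + max |l| |u|) := le_max_left _ _
        have := hMub _ habs
        rw [abs_two]
        linarith
      have hGb : (fun z => 1 - 2 * F (b - z)) b = 0 := by
        simp only [sub_self, hF0]
        norm_num
      have hβ' : β = if bbar = b then 2 * f (b - b)
          else ((1 - 2 * F (b - bbar)) - (1 - 2 * F (b - b))) / (bbar - b) := by
        rw [hβ, if_neg hA, if_neg hCU]
        split_ifs with h
        · rw [sub_self]
        · rw [sub_self, hF0]; congr 1; ring
      have hkey := my_key (fun z => 1 - 2 * F (b - z)) (fun z => 2 * f (b - z)) hG (2 * Mbar)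
        C x b bbar hx hbC hbbarC hbound hGb β hβ'
      rw [hψval]
      calc |1 - 2 * F (b - x) - β * (x - b)| ≤ 2 * (2 * Mbar) * |x - bbar| := hkey
        _ = 4 * Mbar * |x - bbar| := by ring
end
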